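/- arXiv:1509.01931 — 3 statements merged into one kernel-verified Lean document; each statement's English description precedes it below -/
import Mathlib

section
/- Let G be a complex r×t matrix and K a t×t positive semidefinite Hermitian matrix. Then det(I_t + 2·Gᴴ·G·K) ≤ 2^(min(t,r)) · det(I_t + Gᴴ·G·K). -/
/-!
By Sylvester's identity `det (1 + A * B) = det (1 + B * A)`, the matrix `Gᴴ * G * K` may be
replaced by a positive semidefinite matrix of size `min t r`: `B * Gᴴ * G * Bᴴ` with `K = Bᴴ * B`
when `t ≤ r`, and `G * K * Gᴴ` when `r ≤ t`. For a positive semidefinite matrix with eigenvalues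
`λᵢ ≥ 0`, both determinants are products over the eigenvalues, and `1 + 2 λᵢ ≤ 2 (1 + λᵢ)`.
-/

open Matrix ComplexOrder

namespace Matrix

variable {𝕜 : Type*} [RCLike 𝕜] {n : Type*} [Fintype n] [DecidableEq n]

theorem IsHermitian.det_cfc {A : Matrix n n 𝕜} (hA : A.IsHermitian) (f : ℝ → ℝ) :
    (cfc f A).det = ∏ i, (f (hA.eigenvalues i) : 𝕜) := by
  rw [hA.cfc_eq f, IsHermitian.cfc, Unitary.conjStarAlgAut_apply, det_mul_comm, ← mul_assoc]
  simp

theorem IsHermitian.det_one_add_smul {A : Matrix n n 𝕜} (hA : A.IsHermitian) (c : ℝ) :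
    (1 + c • A).det = ∏ i, ((1 + c * hA.eigenvalues i : ℝ) : 𝕜) := by
  rw [← hA.det_cfc (fun x ↦ 1 + c * x), cfc_const_add .., cfc_const_mul_id .., map_one]

theorem PosSemidef.det_one_add_smul_le {A : Matrix n n 𝕜} (hA : A.PosSemidef) {c : ℝ}
    (hc : 1 ≤ c) : (1 + c • A).det ≤ (c : 𝕜) ^ Fintype.card n * (1 + A).det := by
  have h : (1 + A).det = ∏ i, ((1 + hA.isHermitian.eigenvalues i : ℝ) : 𝕜) := by
    simpa only [one_smul, one_mul] using hA.isHermitian.det_one_add_smul 1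
  rw [hA.isHermitian.det_one_add_smul, h, ← RCLike.ofReal_prod, ← RCLike.ofReal_prod,
    ← RCLike.ofReal_pow, ← RCLike.ofReal_mul, RCLike.ofReal_le_ofReal, ← Finset.card_univ,
    ← Finset.prod_const, ← Finset.prod_mul_distrib]
  refine Finset.prod_le_prod (fun i _ ↦ ?_) (fun i _ ↦ ?_) <;>
    nlinarith [hA.eigenvalues_nonneg i]

theorem det_one_add_smul_mul_le_of_posSemidef {m : Type*} [Fintype m] [DecidableEq m]
    {A : Matrix n m 𝕜} {B : Matrix m n 𝕜} (hBA : (B * A).PosSemidef) {c : ℝ} (hc : 1 ≤ c) :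
    (1 + c • (A * B)).det ≤ (c : 𝕜) ^ Fintype.card m * (1 + A * B).det := by
  rw [← Matrix.smul_mul, det_one_add_mul_comm, Matrix.mul_smul, det_one_add_mul_comm]
  exact hBA.det_one_add_smul_le hc

end Matrix

theorem stmt_9 {r t : ℕ} (G : Matrix (Fin r) (Fin t) ℂ)
    (K : Matrix (Fin t) (Fin t) ℂ) (hK : K.PosSemidef) :
    (1 + (2 : ℂ) • (Gᴴ * G * K)).det ≤ (2 : ℂ) ^ (min t r) * (1 + Gᴴ * G * K).det := by
  rw [show (2 : ℂ) = ((2 : ℝ) : ℂ) by norm_num, Complex.coe_smul]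
  rcases le_total t r with h | h
  · open scoped MatrixOrder in
    obtain ⟨B, rfl⟩ := CStarAlgebra.nonneg_iff_eq_star_mul_self.mp hK.nonneg
    have hBA : (B * (Gᴴ * G * Bᴴ)).PosSemidef := by
      simpa only [Matrix.mul_assoc] using
        (posSemidef_conjTranspose_mul_self G).mul_mul_conjTranspose_same B
    rw [min_eq_left h, ← Matrix.mul_assoc (Gᴴ * G)]
    have := det_one_add_smul_mul_le_of_posSemidef hBA one_le_two
    rw [Fintype.card_fin] at this
    exact this
  · rw [min_eq_right h, Matrix.mul_assoc Gᴴ]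
    have := det_one_add_smul_mul_le_of_posSemidef (hK.mul_mul_conjTranspose_same G) one_le_two
    rw [Fintype.card_fin] at this
    exact this
end

section
/- Let A and B be t×t positive semidefinite Hermitian complex matrices and K a t×t positive semidefinite Hermitian matrix. Then det(I_t + A·K) · det(I_t + B·K) ≥ det(I_t + (A+B)·K). -/
open Matrix ComplexOrder
open scoped MatrixOrder

/-! With `S = √K`, Sylvester's identity `det (1 + X S²) = det (1 + S X S)` turns the claim into
`det (P + N) ≤ det P * det (1 + N)` for `P = 1 + S A S ≥ 1` and `N = S B S ≥ 0`. Writing `N = T²`,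
`det (P + N) = det P * det (1 + T P⁻¹ T)`, and `P⁻¹ ≤ 1` gives `1 + T P⁻¹ T ≤ 1 + N`; the
determinant is monotone in the Loewner order on positive definite matrices, since
`det (X + T²) = det X * det (1 + T X⁻¹ T)` and a matrix `≥ 1` has all eigenvalues `≥ 1`. -/

namespace Matrix

section CommRing

variable {n R : Type*} [Fintype n] [DecidableEq n] [CommRing R]

theorem det_one_add_mul_mul_self (X T : Matrix n n R) :
    (1 + X * (T * T)).det = (1 + T * X * T).det := by
  rw [← Matrix.mul_assoc, det_one_add_mul_comm, Matrix.mul_assoc]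

theorem det_add_mul_self {P : Matrix n n R} (hP : IsUnit P.det) (T : Matrix n n R) :
    (P + T * T).det = P.det * (1 + T * P⁻¹ * T).det := by
  have hfactor : P + T * T = P * (1 + P⁻¹ * (T * T)) := by
    rw [Matrix.mul_add, Matrix.mul_one, mul_nonsing_inv_cancel_left _ _ hP]
  rw [hfactor, det_mul, det_one_add_mul_mul_self]

end CommRing

variable {n : Type*} [Fintype n] [DecidableEq n]

omit [Fintype n] in
theorem posDef_of_one_le {P : Matrix n n ℂ} (hP : 1 ≤ P) : P.PosDef := by
  simpa using PosDef.one.add_posSemidef (le_iff.mp hP)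

open scoped Matrix.Norms.L2Operator in
theorem inv_le_one_of_one_le {P : Matrix n n ℂ} (hP : 1 ≤ P) : P⁻¹ ≤ 1 := by
  lift P to (Matrix n n ℂ)ˣ using CStarAlgebra.isUnit_of_le 1 hP
  simpa using CStarAlgebra.inv_le_one (a := P) hP

theorem one_le_det_of_one_le {Y : Matrix n n ℂ} (hY : 1 ≤ Y) : 1 ≤ Y.det := by
  have hYh : Y.IsHermitian := (posDef_of_one_le hY).isHermitian
  have heig (i : n) : 1 ≤ hYh.eigenvalues i :=
    (CFC.one_le_iff Y).mp hY _ (hYh.eigenvalues_mem_spectrum_real i)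
  rw [hYh.det_eq_prod_eigenvalues]
  exact Finset.one_le_prod fun i _ ↦ by
    simpa using (RCLike.ofReal_le_ofReal (K := ℂ)).mpr (heig i)

theorem det_le_det_of_le {X Y : Matrix n n ℂ} (hX : X.PosDef) (hXY : X ≤ Y) :
    X.det ≤ Y.det := by
  set T := CFC.sqrt (Y - X)
  have hY : Y = X + T * T := by
    rw [CFC.sqrt_mul_sqrt_self _ (sub_nonneg.mpr hXY), add_sub_cancel]
  have hconj : 1 ≤ 1 + T * X⁻¹ * T :=
    le_add_of_nonneg_right (conjugate_nonneg_of_nonneg hX.inv.posSemidef.nonneg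
      (CFC.sqrt_nonneg _))
  rw [hY, det_add_mul_self hX.det_pos.ne'.isUnit]
  exact le_mul_of_one_le_right hX.det_pos.le (one_le_det_of_one_le hconj)

theorem det_add_le_det_mul_det_one_add {P N : Matrix n n ℂ} (hP : 1 ≤ P) (hN : 0 ≤ N) :
    (P + N).det ≤ P.det * (1 + N).det := by
  set T := CFC.sqrt N
  have hTT : T * T = N := CFC.sqrt_mul_sqrt_self N hN
  have hPpos : P.PosDef := posDef_of_one_le hP
  have hconj : T * P⁻¹ * T ≤ T * T := by
    simpa using conjugate_le_conjugate_of_nonneg (inv_le_one_of_one_le hP) (CFC.sqrt_nonneg N)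
  have hposDef : (1 + T * P⁻¹ * T).PosDef := PosDef.one.add_posSemidef
    (conjugate_nonneg_of_nonneg hPpos.inv.posSemidef.nonneg (CFC.sqrt_nonneg N)).posSemidef
  rw [← hTT, det_add_mul_self hPpos.det_pos.ne'.isUnit]
  exact mul_le_mul_of_nonneg_left (det_le_det_of_le hposDef (add_le_add_right hconj 1))
    hPpos.det_pos.le

end Matrix

theorem stmt_11 {t : ℕ} (A B K : Matrix (Fin t) (Fin t) ℂ)
    (hA : A.PosSemidef) (hB : B.PosSemidef) (hK : K.PosSemidef) :
    (1 + (A + B) * K).det ≤ (1 + A * K).det * (1 + B * K).det := by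
  set S := CFC.sqrt K
  have hdet (X : Matrix (Fin t) (Fin t) ℂ) : (1 + X * K).det = (1 + S * X * S).det := by
    rw [← CFC.sqrt_mul_sqrt_self K hK.nonneg, det_one_add_mul_mul_self]
  have hconj {X : Matrix (Fin t) (Fin t) ℂ} (hX : X.PosSemidef) : 0 ≤ S * X * S :=
    conjugate_nonneg_of_nonneg hX.nonneg (CFC.sqrt_nonneg K)
  rw [hdet, hdet, hdet, Matrix.mul_add, Matrix.add_mul, ← add_assoc]
  exact det_add_le_det_mul_det_one_add (le_add_of_nonneg_right (hconj hA)) (hconj hB)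
end

section
/- Let G be a complex r×t matrix, K a t×t positive semidefinite Hermitian matrix, and σ² > 0. Then det(I_t + Gᴴ·G·K·(I_t + Gᴴ·G·K)⁻¹) ≤ 2^(min(t,r)). -/
/-!
Write `K = Rᴴ R` and `A = GᴴG K`. By Sylvester's identity
`det (1 + c • A) = det (1 + c • B)` with `B = (G Rᴴ)ᴴ (G Rᴴ)` positive semidefinite, so with
`μ` the eigenvalues of `B`,
`det (1 + A (1 + A)⁻¹) = det (1 + 2A) / det (1 + A) = ∏ (1 + 2μᵢ) / (1 + μᵢ)`.
Each factor is at most `2`, and equals `1` when `μᵢ = 0`; the number of nonzero `μᵢ` is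
`rank B = rank (G Rᴴ) ≤ min t r`.
-/

open Matrix ComplexOrder

theorem Matrix.IsHermitian.det_one_add_smul_s18 {𝕜 n : Type*} [RCLike 𝕜] [Fintype n]
    [DecidableEq n] {A : Matrix n n 𝕜} (hA : A.IsHermitian) (c : ℝ) :
    (1 + (c : 𝕜) • A).det = ∏ i, ((1 + c * hA.eigenvalues i : ℝ) : 𝕜) := by
  conv_lhs => rw [hA.spectral_theorem]
  rw [← map_one (Unitary.conjStarAlgAut 𝕜 _ hA.eigenvectorUnitary), ← map_smul, ← map_add,
    Unitary.conjStarAlgAut_apply, det_mul_right_comm,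
    Unitary.mul_star_self_of_mem hA.eigenvectorUnitary.2, one_mul,
    ← diagonal_one, ← diagonal_smul, diagonal_add, det_diagonal]
  simp

theorem Matrix.det_one_add_smul_mul_conjTranspose_mul_self {n k α : Type*} [Fintype n] [Fintype k]
    [DecidableEq n] [DecidableEq k] [CommRing α] [StarRing α]
    (X : Matrix n n α) (R : Matrix k n α) (c : α) :
    (1 + c • (X * (Rᴴ * R))).det = (1 + c • (R * X * Rᴴ)).det := by
  rw [← Matrix.mul_assoc, ← smul_mul, det_one_add_mul_comm, Matrix.mul_smul, Matrix.mul_assoc]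

theorem Matrix.det_one_add_smul_conjTranspose_mul_mul_eq_prod_eigenvalues {𝕜 m n k : Type*}
    [RCLike 𝕜] [Fintype m] [Fintype n] [Fintype k] [DecidableEq n] [DecidableEq k]
    (G : Matrix m n 𝕜) (R : Matrix k n 𝕜) (c : ℝ) :
    (1 + (c : 𝕜) • (Gᴴ * G * (Rᴴ * R))).det =
      ∏ i, ((1 + c * (isHermitian_conjTranspose_mul_self (G * Rᴴ)).eigenvalues i : ℝ) : 𝕜) := by
  have hRGGR : R * (Gᴴ * G) * Rᴴ = (G * Rᴴ)ᴴ * (G * Rᴴ) := by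
    simp only [conjTranspose_mul, conjTranspose_conjTranspose, Matrix.mul_assoc]
  rw [det_one_add_smul_mul_conjTranspose_mul_self, hRGGR, IsHermitian.det_one_add_smul_s18]

theorem Matrix.card_ne_zero_eigenvalues_conjTranspose_mul_self_le {𝕜 m n : Type*} [RCLike 𝕜]
    [Fintype m] [Fintype n] [DecidableEq n] (A : Matrix m n 𝕜) :
    Fintype.card {i // (isHermitian_conjTranspose_mul_self A).eigenvalues i ≠ 0} ≤
      min (Fintype.card n) (Fintype.card m) := by
  rw [← IsHermitian.rank_eq_card_non_zero_eigs, rank_conjTranspose_mul_self]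
  exact le_min A.rank_le_card_width A.rank_le_card_height

theorem prod_one_add_two_mul_div_prod_one_add_le {ι : Type*} [Fintype ι] {x : ι → ℝ}
    (hx : ∀ i, 0 ≤ x i) :
    (∏ i, (1 + 2 * x i)) / ∏ i, (1 + x i) ≤ 2 ^ Fintype.card {i // x i ≠ 0} := by
  classical
  have factor_le : ∀ i, (1 + 2 * x i) / (1 + x i) ≤ if x i ≠ 0 then 2 else 1 := by
    intro i
    rw [div_le_iff₀ (by linarith [hx i])]
    split_ifs with h
    · linarith [hx i]
    · simp [not_not.mp h]
  calc (∏ i, (1 + 2 * x i)) / ∏ i, (1 + x i) = ∏ i, (1 + 2 * x i) / (1 + x i) :=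
        (Finset.prod_div_distrib ..).symm
    _ ≤ ∏ i, if x i ≠ 0 then (2 : ℝ) else 1 :=
        Finset.prod_le_prod (fun i _ => div_nonneg (by linarith [hx i]) (by linarith [hx i]))
          fun i _ => factor_le i
    _ = 2 ^ Fintype.card {i // x i ≠ 0} := by
        rw [Finset.prod_ite, Finset.prod_const, Finset.prod_const_one, mul_one,
          Fintype.card_subtype]

theorem Matrix.det_one_add_mul_inv_one_add {n K : Type*} [Fintype n] [DecidableEq n] [Field K]
    {A : Matrix n n K} (h : (1 + A).det ≠ 0) :
    (1 + A * (1 + A)⁻¹).det = (1 + (2 : K) • A).det / (1 + A).det := by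
  have : 1 + A * (1 + A)⁻¹ = (1 + (2 : K) • A) * (1 + A)⁻¹ := by
    rw [two_smul, ← add_assoc, add_mul _ A, mul_nonsing_inv _ (isUnit_iff_ne_zero.mpr h)]
  rw [this, det_mul, det_nonsing_inv, Ring.inverse_eq_inv', div_eq_mul_inv]

theorem Matrix.det_one_add_mul_inv_one_add_le {n : Type*} [Fintype n] [DecidableEq n]
    {M : Matrix n n ℂ} {μ : n → ℝ} (hμ : ∀ i, 0 ≤ μ i)
    (hdet : ∀ c : ℝ, (1 + (c : ℂ) • M).det = ∏ i, ((1 + c * μ i : ℝ) : ℂ)) :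
    (1 + M * (1 + M)⁻¹).det ≤ 2 ^ Fintype.card {i // μ i ≠ 0} := by
  have hdet₁ : (1 + M).det = ((∏ i, (1 + μ i) : ℝ) : ℂ) := by simpa using hdet 1
  have hdet₂ : (1 + (2 : ℂ) • M).det = ((∏ i, (1 + 2 * μ i) : ℝ) : ℂ) := by
    simpa using hdet 2
  have hpos : 0 < ∏ i, (1 + μ i) := Finset.prod_pos fun i _ => by linarith [hμ i]
  rw [det_one_add_mul_inv_one_add (by rw [hdet₁]; exact_mod_cast hpos.ne'), hdet₁, hdet₂,
    ← Complex.ofReal_div, ← Complex.ofReal_ofNat, ← Complex.ofReal_pow, Complex.real_le_real]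
  exact prod_one_add_two_mul_div_prod_one_add_le hμ

theorem stmt_18_general {r t : ℕ} (G : Matrix (Fin r) (Fin t) ℂ)
    (K : Matrix (Fin t) (Fin t) ℂ) (hK : K.PosSemidef) :
    (1 + Gᴴ * G * K * (1 + Gᴴ * G * K)⁻¹).det ≤ (2 : ℂ) ^ (min t r) := by
  open scoped MatrixOrder in
  obtain ⟨R, rfl⟩ := CStarAlgebra.nonneg_iff_eq_star_mul_self.mp hK.nonneg
  rw [star_eq_conjTranspose]
  calc _ ≤ (2 : ℂ) ^ Fintype.card
          {i // (isHermitian_conjTranspose_mul_self (G * Rᴴ)).eigenvalues i ≠ 0} :=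
        det_one_add_mul_inv_one_add_le (posSemidef_conjTranspose_mul_self _).eigenvalues_nonneg
          (det_one_add_smul_conjTranspose_mul_mul_eq_prod_eigenvalues G R)
    _ ≤ 2 ^ min t r := by
        gcongr
        · norm_num
        · simpa only [Fintype.card_fin] using
            (G * Rᴴ).card_ne_zero_eigenvalues_conjTranspose_mul_self_le

theorem stmt_18 {r t : ℕ} (G : Matrix (Fin r) (Fin t) ℂ)
    (K : Matrix (Fin t) (Fin t) ℂ) (hK : K.PosSemidef)
    (σ2 : ℝ) (hσ2 : 0 < σ2) :
    (1 + Gᴴ * G * K * (1 + Gᴴ * G * K)⁻¹).det ≤ (2 : ℂ) ^ (min t r) :=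
  stmt_18_general G K hK
end
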